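/- Let ω ∈ ℝ \ {0} satisfy a·m − 2·M·r₊·ω = 0, let λ ∈ ℝ satisfy λ + a²·ω² ≥ |m|·(|m|+1), and let μ₀ > |ω|. Then there exist r₊ < B₀ < B₁ and constants C₀, C₁ > 0 such that for every real μ with μ² ≥ μ₀², every ε ≥ 0, and every smooth f : ℝ → ℂ compactly supported in (r₊ + ε, ∞): ∫ ( Δ·|f'|² + C₀·r²·𝟙_{r∉[B₀,B₁]}·(μ² − ω²)·|f|² ) dr ≤ C₁·∫_{B₀}^{B₁} |f|² dr + ∫ ( Δ·|f'|² + (V/Δ)·|f|² ) dr. In particular, ν_μ^{(ε)} := inf{ ∫_{r₊+ε}^{∞} ( Δ·|f'|² + (V/Δ)·|f|² ) dr : f smooth, compactly supported in (r₊+ε, ∞), ∫ |f|² dr = 1 } satisfies ν_μ^{(ε)} ≥ −C₁ > −∞. -/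

import Mathlib

open Real Set MeasureTheory Filter Topology ComplexConjugate

/-- The larger root `r₊ = M + √(M² − a²)`. -/
noncomputable def rPlus (M a : ℝ) : ℝ := M + Real.sqrt (M ^ 2 - a ^ 2)

/-- The smaller root `r₋ = M − √(M² − a²)`. -/
noncomputable def rMinus (M a : ℝ) : ℝ := M - Real.sqrt (M ^ 2 - a ^ 2)

/-- `Δ(r) = (r − r₊)(r − r₋)`. -/
noncomputable def Delta (M a r : ℝ) : ℝ := (r - rPlus M a) * (r - rMinus M a)

/-- The radial potential with real parameters `ω, λ, μ`. -/
noncomputable def Vpot (M a : ℝ) (m : ℤ) (ω lam μ r : ℝ) : ℝ :=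
  -(r ^ 2 + a ^ 2) ^ 2 * ω ^ 2 + 4 * M * a * m * r * ω - a ^ 2 * m ^ 2
    + Delta M a r * (lam + a ^ 2 * ω ^ 2 + μ ^ 2 * r ^ 2)

/-- The radial ODE `Δ (Δ R')' − V R = 0` on `(r₊, ∞)`. -/
def RadialODE (M a : ℝ) (m : ℤ) (ω lam μ : ℝ) (R : ℝ → ℂ) : Prop :=
  ∀ r ∈ Ioi (rPlus M a),
    (Delta M a r : ℂ) * deriv (fun s => (Delta M a s : ℂ) * deriv R s) r
      - (Vpot M a m ω lam μ r : ℂ) * R r = 0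

/-- Exponential decay at infinity of `h` together with its derivative. -/
def ExpDecay (rp : ℝ) (h : ℝ → ℂ) : Prop :=
  ∃ C c : ℝ, 0 < C ∧ 0 < c ∧ ∀ r : ℝ, rp + 1 ≤ r →
    ‖h r‖ + ‖deriv h r‖ ≤ C * Real.exp (-c * r)

/-- The regularized Lagrangian `∫_{r₊+ε}^∞ (Δ |f'|² + (V/Δ) |f|²)`. -/
noncomputable def Lag (M a : ℝ) (m : ℤ) (ω lam μ ε : ℝ) (f : ℝ → ℂ) : ℝ :=
  ∫ r in Ioi (rPlus M a + ε),
    (Delta M a r * ‖deriv f r‖ ^ 2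
      + Vpot M a m ω lam μ r / Delta M a r * ‖f r‖ ^ 2)

/-- The set of values of the regularized Lagrangian over smooth test functions compactly
supported in `(r₊+ε, ∞)` with unit `L²` norm. -/
def LagVals (M a : ℝ) (m : ℤ) (ω lam μ ε : ℝ) : Set ℝ :=
  {x : ℝ | ∃ f : ℝ → ℂ, ContDiff ℝ (⊤ : ℕ∞) f ∧ HasCompactSupport f ∧
    tsupport f ⊆ Ioi (rPlus M a + ε) ∧
    (∫ r in Ioi (rPlus M a + ε), ‖f r‖ ^ 2) = 1 ∧
    x = Lag M a m ω lam μ ε f}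

noncomputable def Pq (M a rp r : ℝ) : ℝ := 4*M*(2*M*rp) - (r+rp)*(r^2+rp^2+2*a^2)

lemma Vpot_eq (M a : ℝ) (m : ℤ) (ω lam μ r rp rm : ℝ)
    (h1 : rp + rm = 2*M) (h2 : rp*rm = a^2) (hm : a*(m:ℝ) = 2*M*rp*ω)
    (hrp : rPlus M a = rp) (hrm : rMinus M a = rm) :
    Vpot M a m ω lam μ r = (r-rp)*(r-rm)*(lam + a^2*ω^2 + μ^2*r^2)
      + ω^2*(r-rp)*(Pq M a rp r) := by
  have he2 : rp^2 + a^2 = 2*M*rp := by linear_combination rp*h1 - h2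
  simp only [Vpot, Delta, Pq, hrp, hrm]
  linear_combination (4*M*r*ω - a*(m:ℝ) - 2*M*rp*ω) * hm - ω^2*(rp^2+a^2+2*M*rp) * he2

private lemma aux_L1 (M a rp r B₁ : ℝ) (hM : 0 < M) (hrp : 0 < rp) (hr : rp < r)
    (hrB : r ≤ B₁) (ha : a^2 < rp^2) :
    -(8*B₁^3) ≤ Pq M a rp r := by
  rw [Pq]
  have h0 : 0 < r := lt_trans hrp hr
  have e1 : r + rp ≤ 2*B₁ := by linarith
  have e2 : r^2+rp^2+2*a^2 ≤ 4*B₁^2 := by nlinarith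
  nlinarith [mul_le_mul e1 e2 (by nlinarith) (by linarith), mul_pos (mul_pos hM hM) hrp]

private lemma aux_L3 (W₀ L δ t A₂ c rp : ℝ) (hA : 0 ≤ A₂) (ht : 0 < t) (htδ : t < δ)
    (hδ1 : δ < 1) (hL : 0 < L) (hW₀ : 0 < W₀) (hδL : δ*(L+W₀) = W₀)
    (hLc : L = c + 4*rp + 1) (hc : 0 ≤ c) (hrp : 0 ≤ rp) :
    0 ≤ W₀ + A₂*t - c*t - 4*rp*t^2 - t^3 := by
  have ht1 : t < 1 := lt_trans htδ hδ1
  have h2 : t^2 ≤ t := by nlinarith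
  have h3 : t^3 ≤ t := by nlinarith
  have h4 : c*t + 4*rp*t^2 + t^3 ≤ L*t := by
    rw [hLc]
    nlinarith [mul_le_mul_of_nonneg_left h2 (by linarith : (0:ℝ) ≤ 4*rp)]
  have h5 : L*t ≤ L*δ := mul_le_mul_of_nonneg_left (le_of_lt htδ) (le_of_lt hL)
  have h6 : L*δ ≤ W₀ := by nlinarith [mul_nonneg (le_of_lt (lt_trans ht htδ)) (le_of_lt hW₀)]
  nlinarith [mul_nonneg hA (le_of_lt ht)]

private lemma aux_L4 (M a rp r : ℝ) (hM : 0 < M) (hrp : 0 < rp) (hr : 1 < r) :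
    -((2*M + rp^2 + 2*a^2 + rp^3 + 2*a^2*rp) * r^2)
      ≤ -(2*M)*r^2 - (rp^2+2*a^2)*r + (4*M*(2*M*rp) - rp^3 - 2*a^2*rp) := by
  have h1 : 0 ≤ r^2 - r := by nlinarith
  have h2 : 0 ≤ r^2 - 1 := by nlinarith
  nlinarith [mul_nonneg (by positivity : (0:ℝ) ≤ rp^2 + 2*a^2) h1,
    mul_nonneg (by positivity : (0:ℝ) ≤ rp^3 + 2*a^2*rp) h2,
    mul_pos (mul_pos (mul_pos hM hM) hrp) (by norm_num : (0:ℝ) < 8)]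

set_option maxHeartbeats 1000000 in
lemma pot_bound (M a : ℝ) (hM : 0 < M) (ha : |a| < M) (m : ℤ)
    (ω lam μ₀ : ℝ) (hω : ω ≠ 0) (hsup : a * m - 2 * M * rPlus M a * ω = 0)
    (hlam : (|m| : ℝ) * (|m| + 1) ≤ lam + a ^ 2 * ω ^ 2)
    (hμ₀ : |ω| < μ₀) :
    ∃ B₀ B₁ C₁ : ℝ, rPlus M a < B₀ ∧ B₀ < B₁ ∧ 0 < C₁ ∧
      ∀ μ r : ℝ, μ₀^2 ≤ μ^2 → rPlus M a < r →
        (1/2 : ℝ) * r^2 * Set.indicator (Icc B₀ B₁)ᶜ (fun _ => (1:ℝ)) r * (μ^2 - ω^2)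
          ≤ C₁ * Set.indicator (Icc B₀ B₁) (fun _ => (1:ℝ)) r
            + Vpot M a m ω lam μ r / Delta M a r := by
  have ha2 : a^2 < M^2 := by
    linarith [mul_self_lt_mul_self (abs_nonneg a) ha, sq_abs a, sq_nonneg a, sq_nonneg M,
      (by ring : |a| * |a| = |a| ^ 2), (by ring : M * M = M ^ 2)]
  obtain ⟨σ, hσdef⟩ : ∃ x:ℝ, x = Real.sqrt (M^2 - a^2) := ⟨_, rfl⟩
  have hσ2 : σ^2 = M^2 - a^2 := by rw [hσdef]; exact Real.sq_sqrt (by linarith)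
  have hσpos : 0 < σ := by rw [hσdef]; exact Real.sqrt_pos.mpr (by linarith)
  have hσne : σ ≠ 0 := ne_of_gt hσpos
  obtain ⟨rp, hrpdef⟩ : ∃ x:ℝ, x = M + σ := ⟨_, rfl⟩
  obtain ⟨rm, hrmdef⟩ : ∃ x:ℝ, x = M - σ := ⟨_, rfl⟩
  have hrp : rPlus M a = rp := by rw [hrpdef, rPlus, hσdef]
  have hrm : rMinus M a = rm := by rw [hrmdef, rMinus, hσdef]
  have h1 : rp + rm = 2*M := by rw [hrpdef, hrmdef]; ring
  have h2 : rp * rm = a^2 := by rw [hrpdef, hrmdef]; linear_combination -hσ2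
  have hrppos : 0 < rp := by rw [hrpdef]; linarith
  have ha0 : a ≠ 0 := by
    intro h
    apply hω
    rw [hrp] at hsup
    have h' : (2*M*rp)*ω = 0 := by rw [h] at hsup; push_cast at hsup; linarith
    rcases mul_eq_zero.mp h' with h'' | h''
    · exact absurd h'' (ne_of_gt (by linarith [mul_pos hM hrppos]))
    · exact h''
  have ha2pos : 0 < a^2 := pow_two_pos_of_ne_zero ha0
  have hm : a*(m:ℝ) = 2*M*rp*ω := by rw [hrp] at hsup; linarith
  have hrmpos : 0 < rm := by
    rw [hrmdef]
    nlinarith [hσ2, ha2pos, hσpos, hM]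
  have hrmrp : rm < rp := by rw [hrpdef, hrmdef]; linarith
  have harp : a^2 < rp^2 := by
    rw [hrpdef]
    have h8 : (M+σ)^2 = M^2 + 2*(M*σ) + σ^2 := by ring
    linarith [mul_pos hM hσpos, sq_nonneg σ]
  have he2 : rp^2 + a^2 = 2*M*rp := by linear_combination rp*h1 - h2
  have hupos : 0 < 2*M*rp := by linarith [mul_pos hM hrppos]
  have hωsq : 0 < ω^2 := pow_two_pos_of_ne_zero hω
  -- lambda lower bound
  have hm2 : (m:ℝ)^2 * a^2 = (2*M*rp)^2*ω^2 := by linear_combination (a*(m:ℝ) + 2*M*rp*ω)*hm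
  have hlam0 : 0 ≤ lam + a^2*ω^2 := by
    refine le_trans ?_ hlam
    have h8 : (0:ℝ) ≤ (|m| : ℤ) := by exact_mod_cast abs_nonneg m
    have h8' : (0:ℝ) ≤ ((|m| : ℤ) : ℝ) := h8
    exact mul_nonneg (abs_nonneg _) (by linarith)
  obtain ⟨A₂, hA₂def⟩ : ∃ x:ℝ, x = (2*M*rp)^2/a^2 := ⟨_, rfl⟩
  have hA₂nn : 0 ≤ A₂ := by rw [hA₂def]; positivity
  have hlamA : A₂*ω^2 ≤ lam + a^2*ω^2 := by
    have h3 : (m:ℝ)^2 ≤ |(m:ℝ)| * (|(m:ℝ)| + 1) := by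
      have := abs_nonneg (m:ℝ)
      have h9 : |(m:ℝ)| * (|(m:ℝ)| + 1) = |(m:ℝ)| ^ 2 + |(m:ℝ)| := by ring
      linarith [sq_abs (m:ℝ)]
    have hlam' : |(m:ℝ)| * (|(m:ℝ)| + 1) ≤ lam + a ^ 2 * ω ^ 2 := by push_cast at hlam; exact hlam
    have h4 : A₂*ω^2 = (m:ℝ)^2 := by
      rw [hA₂def, div_mul_eq_mul_div, div_eq_iff (ne_of_gt ha2pos)]
      linear_combination -hm2
    linarith
  -- near-horizon constants
  have hMrp : a^2 < M*rp := by
    rw [hrpdef]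
    have h8 : M*(M+σ) = M^2 + M*σ := by ring
    linarith [mul_pos hM hσpos]
  have hPrp : Pq M a rp rp = -(8*M*rp*σ) := by
    rw [Pq]
    linear_combination (-4*rp)*he2 - 8*M*rp*hrpdef
  obtain ⟨W₀, hW₀def⟩ : ∃ x:ℝ, x = A₂*(2*σ) + Pq M a rp rp := ⟨_, rfl⟩
  have hW₀ : 0 < W₀ := by
    rw [hW₀def, hPrp, hA₂def]
    have h5 : 4*M*rp < (2*M*rp)^2/a^2 := by
      rw [lt_div_iff₀ ha2pos]
      have h8 := mul_pos hupos (sub_pos.mpr hMrp)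
      have h9 : (2*M*rp)*(M*rp - a^2) = (2*M*rp)*(M*rp) - (2*M*rp)*a^2 := by ring
      nlinarith [h8]
    linarith [mul_pos hσpos (sub_pos.mpr h5),
      (by ring : σ*((2*M*rp)^2/a^2 - 4*M*rp) = σ*((2*M*rp)^2/a^2) - 4*(M*(rp*σ)))]
  obtain ⟨L, hLdef⟩ : ∃ x:ℝ, x = (4*rp^2 + 2*(rp^2+a^2)) + 4*rp + 1 := ⟨_, rfl⟩
  have hL : 0 < L := by rw [hLdef]; positivity
  obtain ⟨δ, hδdef⟩ : ∃ x:ℝ, x = W₀/(L+W₀) := ⟨_, rfl⟩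
  have hδpos : 0 < δ := by rw [hδdef]; exact div_pos hW₀ (by linarith)
  have hδ1 : δ < 1 := by rw [hδdef, div_lt_one (by linarith)]; linarith
  have hδL : δ*(L+W₀) = W₀ := by rw [hδdef]; field_simp
  obtain ⟨B₀, hB₀def⟩ : ∃ x:ℝ, x = rp + δ := ⟨_, rfl⟩
  have hω2μ : ω^2 < μ₀^2 := by
    linarith [mul_self_lt_mul_self (abs_nonneg ω) hμ₀, sq_abs ω,
      (by ring : |ω| * |ω| = |ω| ^ 2), (by ring : μ₀ * μ₀ = μ₀ ^ 2)]
  obtain ⟨κ, hκdef⟩ : ∃ x:ℝ, x = (μ₀^2 - ω^2)/2 := ⟨_, rfl⟩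
  have hκpos : 0 < κ := by rw [hκdef]; linarith
  obtain ⟨c₂, hc₂def⟩ : ∃ x:ℝ, x = 2*M + rp^2 + 2*a^2 + rp^3 + 2*a^2*rp := ⟨_, rfl⟩
  have hc₂pos : 0 < c₂ := by
    rw [hc₂def]
    have h8 : 0 < rp^2 := pow_pos hrppos 2
    have h9 : 0 < rp^3 := pow_pos hrppos 3
    have h10 : 0 ≤ a^2*rp := mul_nonneg (le_of_lt ha2pos) (le_of_lt hrppos)
    linarith [sq_nonneg a]
  obtain ⟨B₁, hB₁def⟩ : ∃ x:ℝ, x = max (max B₀ 1) (rm + ω^2*c₂/κ) + 1 := ⟨_, rfl⟩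
  have hB₀B₁ : B₀ < B₁ := by
    have h6 : B₀ ≤ max (max B₀ 1) (rm + ω^2*c₂/κ) := le_trans (le_max_left _ _) (le_max_left _ _)
    rw [hB₁def]; linarith
  have hB₁1 : 1 < B₁ := by
    have h6 : (1:ℝ) ≤ max (max B₀ 1) (rm + ω^2*c₂/κ) := le_trans (le_max_right _ _) (le_max_left _ _)
    rw [hB₁def]; linarith
  have hB₁far : rm + ω^2*c₂/κ < B₁ := by
    have h6 := le_max_right (max B₀ 1) (rm + ω^2*c₂/κ)
    rw [hB₁def]; linarith
  obtain ⟨C₁, hC₁def⟩ : ∃ x:ℝ, x = 8*ω^2*B₁^3/(2*σ) + 1 := ⟨_, rfl⟩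
  have hC₁1 : 0 ≤ C₁ - 1 := by
    rw [hC₁def]
    have h7 : 0 ≤ 8*ω^2*B₁^3/(2*σ) := by
      apply div_nonneg _ (by linarith)
      have h8 : 0 < B₁^3 := pow_pos (by linarith) 3
      have h9 : 0 ≤ 8*ω^2 := by positivity
      exact mul_nonneg h9 (le_of_lt h8)
    linarith
  have hC₁pos : 0 < C₁ := by linarith
  have hrpB₀ : rp < B₀ := by rw [hB₀def]; linarith
  refine ⟨B₀, B₁, C₁, by rw [hrp]; exact hrpB₀, hB₀B₁, hC₁pos, ?_⟩
  intro μ r hμ hr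
  rw [hrp] at hr
  have hrrm : 0 < r - rm := by linarith
  have hrrp : 0 < r - rp := by linarith
  have hΔpos : 0 < Delta M a r := by rw [Delta, hrp, hrm]; exact mul_pos hrrp hrrm
  have hVdiv : Vpot M a m ω lam μ r / Delta M a r
      = (lam + a^2*ω^2 + μ^2*r^2) + ω^2 * Pq M a rp r / (r - rm) := by
    rw [Vpot_eq M a m ω lam μ r rp rm h1 h2 hm hrp hrm, Delta, hrp, hrm]
    field_simp
  have hμr : 0 ≤ μ^2*r^2 := mul_nonneg (sq_nonneg μ) (sq_nonneg r)
  by_cases hmem : r ∈ Icc B₀ B₁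
  · rw [Set.indicator_of_mem hmem, Set.indicator_of_notMem (Set.notMem_compl_iff.mpr hmem)]
    rw [hVdiv]
    simp only [mul_zero, zero_mul, mul_one]
    have hPlb : -(8*B₁^3) ≤ Pq M a rp r := aux_L1 M a rp r B₁ hM hrppos hr hmem.2 harp
    have h2σ : 2*σ ≤ r - rm := by
      have h8 : rp ≤ r := le_of_lt hr
      rw [hrmdef]; rw [hrpdef] at h8; linarith
    have hq : -(C₁ - 1) ≤ ω^2 * Pq M a rp r / (r - rm) := by
      rw [le_div_iff₀ hrrm]
      have hCσ : (C₁ - 1)*(2*σ) = 8*ω^2*B₁^3 := by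
        rw [hC₁def]; field_simp; ring
      have hh1 := mul_le_mul_of_nonneg_left h2σ hC₁1
      have hh2 := mul_le_mul_of_nonneg_left hPlb (sq_nonneg ω)
      linarith [hh1, hh2]
    linarith [hlam0, hμr, hq]
  · rw [Set.indicator_of_notMem hmem, Set.indicator_of_mem ((Set.mem_compl_iff _ _).mpr hmem)]
    rw [hVdiv]
    simp only [mul_zero, zero_add, mul_one]
    rcases lt_or_ge r B₀ with hlt | hge₀
    · -- near region : r < B₀
      have ht1 : r - rp < δ := by rw [hB₀def] at hlt; linarith
      have hWr : 0 ≤ A₂*(r - rm) + Pq M a rp r := by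
        have hexp : A₂*(r - rm) + Pq M a rp r
            = W₀ + A₂*(r-rp) - (4*rp^2+2*(rp^2+a^2))*(r-rp) - 4*rp*(r-rp)^2 - (r-rp)^3 := by
          rw [hW₀def]
          simp only [Pq]
          linear_combination A₂*hrpdef - A₂*hrmdef
        rw [hexp]
        exact aux_L3 W₀ L δ (r-rp) A₂ (4*rp^2+2*(rp^2+a^2)) rp hA₂nn hrrp ht1 hδ1 hL hW₀ hδL
          hLdef (by positivity) (le_of_lt hrppos)
      have hdivA : -A₂ ≤ Pq M a rp r / (r - rm) := by
        rw [le_div_iff₀ hrrm]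
        have h8 : -A₂ * (r-rm) = -(A₂*(r-rm)) := by ring
        linarith [hWr]
      have hdiv2 : -(A₂*ω^2) ≤ ω^2 * Pq M a rp r / (r - rm) := by
        have hh := mul_le_mul_of_nonneg_left hdivA (sq_nonneg ω)
        rw [mul_div_assoc]
        linarith [hh]
      have hslack2 : 0 ≤ (μ^2 + ω^2)*r^2 :=
        mul_nonneg (by linarith [sq_nonneg μ, sq_nonneg ω]) (sq_nonneg r)
      linarith [hlamA, hμr, hdiv2, hslack2]
    · -- far region : B₁ < r
      rcases le_or_gt r B₁ with hle | hgt
      · exact absurd ⟨hge₀, hle⟩ hmem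
      have hr1 : 1 < r := by linarith
      have hrfar : rm + ω^2*c₂/κ < r := by linarith
      have h1' : -(c₂*r^2) ≤ Pq M a rp r + r^2*(r-rm) := by
        have hid : Pq M a rp r + r^2*(r-rm)
            = -(2*M)*r^2 - (rp^2+2*a^2)*r + (4*M*(2*M*rp) - rp^3 - 2*a^2*rp) := by
          rw [Pq]
          linear_combination (-r^2)*h1
        rw [hid, hc₂def]
        exact aux_L4 M a rp r hM hrppos hr1
      have h2' : ω^2*c₂ ≤ κ*(r-rm) := by
        have h9 : ω^2*c₂/κ < r - rm := by linarith
        rw [div_lt_iff₀ hκpos] at h9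
        linarith [h9]
      have hdivfar : -(ω^2*r^2) - κ*r^2 ≤ ω^2 * Pq M a rp r / (r - rm) := by
        rw [le_div_iff₀ hrrm]
        have hA1 := mul_le_mul_of_nonneg_left h1' (sq_nonneg ω)
        have hA2 := mul_le_mul_of_nonneg_right h2' (sq_nonneg r)
        linarith [hA1, hA2]
      have hslack : 0 ≤ (μ^2 - ω^2 - 2*κ) * r^2 := by
        apply mul_nonneg _ (sq_nonneg r)
        rw [hκdef]; linarith
      linarith [hlam0, hdivfar, hslack]
private lemma Delta_cont (M a : ℝ) : Continuous (fun r => Delta M a r) := by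
  simp only [Delta]; fun_prop

private lemma Vpot_cont (M a : ℝ) (m : ℤ) (ω lam μ : ℝ) :
    Continuous (fun r => Vpot M a m ω lam μ r) := by
  simp only [Vpot, Delta]; fun_prop

private lemma hcs_normsq (f : ℝ → ℂ) (hfc : HasCompactSupport f) :
    HasCompactSupport (fun r => ‖f r‖^2) :=
  hfc.comp_left (g := fun x : ℂ => ‖x‖^2) (by simp)

private lemma integrable_mul_sq (g : ℝ → ℝ) (hg : Continuous g) (f : ℝ → ℂ)
    (hf : Continuous f) (hfc : HasCompactSupport f) :
    MeasureTheory.Integrable (fun r => g r * ‖f r‖^2) := by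
  apply Continuous.integrable_of_hasCompactSupport (hg.mul ((hf.norm).pow 2))
  exact HasCompactSupport.mul_left (hcs_normsq f hfc)

private lemma rm_lt_rp (M a : ℝ) (hM : 0 < M) (ha : |a| < M) : rMinus M a < rPlus M a := by
  have ha2 : a^2 < M^2 := by
    linarith [mul_self_lt_mul_self (abs_nonneg a) ha, sq_abs a, (by ring : |a| * |a| = |a| ^ 2),
      (by ring : M * M = M ^ 2)]
  have h : 0 < Real.sqrt (M^2 - a^2) := Real.sqrt_pos.mpr (by linarith)
  rw [rPlus, rMinus]
  have h2 : M ^ 2 - a ^ 2 = M^2 - a^2 := by norm_num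
  linarith [h2 ▸ h]

private lemma Delta_pos' (M a : ℝ) (hM : 0 < M) (ha : |a| < M) (r : ℝ)
    (hr : rPlus M a < r) : 0 < Delta M a r := by
  rw [Delta]
  have := rm_lt_rp M a hM ha
  exact mul_pos (by linarith) (by linarith)

set_option maxHeartbeats 1000000 in
/-- the coercivity bound for the regularized Lagrangian, and the
resulting lower bound `ν_μ^{(ε)} ≥ −C₁`. -/
theorem stmt5 (M a : ℝ) (hM : 0 < M) (ha : |a| < M) (m : ℤ)
    (ω lam μ₀ : ℝ) (hω : ω ≠ 0) (hsup : a * m - 2 * M * rPlus M a * ω = 0)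
    (hlam : (|m| : ℝ) * (|m| + 1) ≤ lam + a ^ 2 * ω ^ 2)
    (hμ₀ : |ω| < μ₀) :
    ∃ B₀ B₁ C₀ C₁ : ℝ, rPlus M a < B₀ ∧ B₀ < B₁ ∧ 0 < C₀ ∧ 0 < C₁ ∧
      (∀ μ ε : ℝ, μ₀ ^ 2 ≤ μ ^ 2 → 0 ≤ ε →
        ∀ f : ℝ → ℂ, ContDiff ℝ (⊤ : ℕ∞) f → HasCompactSupport f →
          tsupport f ⊆ Ioi (rPlus M a + ε) →
          (∫ r in Ioi (rPlus M a + ε),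
              (Delta M a r * ‖deriv f r‖ ^ 2
                + C₀ * r ^ 2 * Set.indicator (Icc B₀ B₁)ᶜ (fun _ => (1 : ℝ)) r
                  * (μ ^ 2 - ω ^ 2) * ‖f r‖ ^ 2))
            ≤ C₁ * (∫ r in Icc B₀ B₁, ‖f r‖ ^ 2)
              + Lag M a m ω lam μ ε f) ∧
      (∀ μ ε : ℝ, μ₀ ^ 2 ≤ μ ^ 2 → 0 ≤ ε →
        -C₁ ≤ sInf (LagVals M a m ω lam μ ε)) := by
  obtain ⟨B₀, B₁, C₁, hB₀, hB₀B₁, hC₁, hkey⟩ :=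
    pot_bound M a hM ha m ω lam μ₀ hω hsup hlam hμ₀
  have hω2μ : ω^2 < μ₀^2 := by
    linarith [mul_self_lt_mul_self (abs_nonneg ω) hμ₀, sq_abs ω,
      (by ring : |ω| * |ω| = |ω| ^ 2), (by ring : μ₀ * μ₀ = μ₀ ^ 2)]
  have hPart1 : ∀ μ ε : ℝ, μ₀ ^ 2 ≤ μ ^ 2 → 0 ≤ ε →
      ∀ f : ℝ → ℂ, ContDiff ℝ (⊤ : ℕ∞) f → HasCompactSupport f →
        tsupport f ⊆ Ioi (rPlus M a + ε) →
        (∫ r in Ioi (rPlus M a + ε),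
            (Delta M a r * ‖deriv f r‖ ^ 2
              + 1/2 * r ^ 2 * Set.indicator (Icc B₀ B₁)ᶜ (fun _ => (1 : ℝ)) r
                * (μ ^ 2 - ω ^ 2) * ‖f r‖ ^ 2))
          ≤ C₁ * (∫ r in Icc B₀ B₁, ‖f r‖ ^ 2) + Lag M a m ω lam μ ε f := by
    intro μ ε hμε hε f hf hfc hfs
    have hD : MeasurableSet (Ioi (rPlus M a + ε)) := measurableSet_Ioi
    have hfcont : Continuous f := hf.continuous
    have hdercont : Continuous (deriv f) := hf.continuous_deriv (by simp)
    -- integrability of the pieces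
    have I1 : Integrable (fun r => Delta M a r * ‖deriv f r‖ ^ 2) :=
      integrable_mul_sq _ (Delta_cont M a) _ hdercont hfc.deriv
    have Ibase2 : Integrable (fun r => 1/2 * r ^ 2 * (μ ^ 2 - ω ^ 2) * ‖f r‖ ^ 2) :=
      integrable_mul_sq _ (by fun_prop) _ hfcont hfc
    have hindmeas : AEStronglyMeasurable
        (fun r : ℝ => Set.indicator (Icc B₀ B₁)ᶜ (fun _ => (1:ℝ)) r) volume :=
      ((measurable_const.indicator measurableSet_Icc.compl)).aestronglyMeasurable
    have I2 : Integrable (fun r => 1/2 * r ^ 2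
        * Set.indicator (Icc B₀ B₁)ᶜ (fun _ => (1 : ℝ)) r * (μ ^ 2 - ω ^ 2) * ‖f r‖ ^ 2) := by
      have heq : (fun r => 1/2 * r ^ 2 * Set.indicator (Icc B₀ B₁)ᶜ (fun _ => (1 : ℝ)) r
          * (μ ^ 2 - ω ^ 2) * ‖f r‖ ^ 2)
          = fun r => Set.indicator (Icc B₀ B₁)ᶜ (fun _ => (1:ℝ)) r
              * (1/2 * r ^ 2 * (μ ^ 2 - ω ^ 2) * ‖f r‖ ^ 2) := by
        funext r; ring
      rw [heq]
      refine Ibase2.bdd_mul hindmeas (c := 1) (ae_of_all _ fun x => ?_)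
      rw [Real.norm_eq_abs]
      by_cases h : x ∈ (Icc B₀ B₁)ᶜ
      · rw [Set.indicator_of_mem h]; norm_num
      · rw [Set.indicator_of_notMem h]; norm_num
    have I3 : Integrable (fun r => C₁
        * Set.indicator (Icc B₀ B₁) (fun _ => (1 : ℝ)) r * ‖f r‖ ^ 2) := by
      have heq : (fun r => C₁ * Set.indicator (Icc B₀ B₁) (fun _ => (1 : ℝ)) r * ‖f r‖ ^ 2)
          = fun r => Set.indicator (Icc B₀ B₁) (fun _ => (1:ℝ)) r * (C₁ * ‖f r‖ ^ 2) := by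
        funext r; ring
      rw [heq]
      refine (integrable_mul_sq (fun _ => C₁) continuous_const _ hfcont hfc).bdd_mul
        ((measurable_const.indicator measurableSet_Icc).aestronglyMeasurable) (c := 1) (ae_of_all _ fun x => ?_)
      rw [Real.norm_eq_abs]
      by_cases h : x ∈ Icc B₀ B₁
      · rw [Set.indicator_of_mem h]; norm_num
      · rw [Set.indicator_of_notMem h]; norm_num
    have hKsub : tsupport f ⊆ Ioi (rPlus M a) :=
      subset_trans hfs (Ioi_subset_Ioi (by linarith))
    have I4 : IntegrableOn
        (fun r => Vpot M a m ω lam μ r / Delta M a r * ‖f r‖ ^ 2)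
        (Ioi (rPlus M a + ε)) := by
      have hcontOn : ContinuousOn
          (fun r => Vpot M a m ω lam μ r / Delta M a r * ‖f r‖ ^ 2) (Ioi (rPlus M a)) := by
        refine ContinuousOn.mul (ContinuousOn.div ((Vpot_cont M a m ω lam μ).continuousOn)
          ((Delta_cont M a).continuousOn) fun r hr => ne_of_gt (Delta_pos' M a hM ha r hr))
          (((hfcont.norm).pow 2).continuousOn)
      have hIK : IntegrableOn (fun r => Vpot M a m ω lam μ r / Delta M a r * ‖f r‖ ^ 2)
          (tsupport f) := ContinuousOn.integrableOn_compact hfc (hcontOn.mono hKsub)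
      have hInd : Integrable (Set.indicator (tsupport f)
          (fun r => Vpot M a m ω lam μ r / Delta M a r * ‖f r‖ ^ 2)) :=
        (integrable_indicator_iff (isClosed_tsupport f).measurableSet).mpr hIK
      refine (hInd.integrableOn).congr_fun (fun r hr => ?_) hD
      by_cases h : r ∈ tsupport f
      · rw [Set.indicator_of_mem h]
      · rw [Set.indicator_of_notMem h, image_eq_zero_of_notMem_tsupport h]
        simp
    -- pointwise inequality
    have hpt : ∀ r ∈ Ioi (rPlus M a + ε),
        (Delta M a r * ‖deriv f r‖ ^ 2
          + 1/2 * r ^ 2 * Set.indicator (Icc B₀ B₁)ᶜ (fun _ => (1 : ℝ)) r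
            * (μ ^ 2 - ω ^ 2) * ‖f r‖ ^ 2)
        ≤ (Delta M a r * ‖deriv f r‖ ^ 2
            + Vpot M a m ω lam μ r / Delta M a r * ‖f r‖ ^ 2)
          + C₁ * Set.indicator (Icc B₀ B₁) (fun _ => (1 : ℝ)) r * ‖f r‖ ^ 2 := by
      intro r hr
      have hrr : rPlus M a < r := lt_of_le_of_lt (by linarith) hr
      have h := hkey μ r hμε hrr
      have hsq : (0:ℝ) ≤ ‖f r‖ ^ 2 := sq_nonneg _
      have hmul := mul_le_mul_of_nonneg_right h hsq
      nlinarith [hmul]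
    have hmono : (∫ r in Ioi (rPlus M a + ε),
        (Delta M a r * ‖deriv f r‖ ^ 2
          + 1/2 * r ^ 2 * Set.indicator (Icc B₀ B₁)ᶜ (fun _ => (1 : ℝ)) r
            * (μ ^ 2 - ω ^ 2) * ‖f r‖ ^ 2))
        ≤ ∫ r in Ioi (rPlus M a + ε),
            ((Delta M a r * ‖deriv f r‖ ^ 2
              + Vpot M a m ω lam μ r / Delta M a r * ‖f r‖ ^ 2)
              + C₁ * Set.indicator (Icc B₀ B₁) (fun _ => (1 : ℝ)) r * ‖f r‖ ^ 2) :=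
      setIntegral_mono_on (by exact I1.integrableOn.add I2.integrableOn)
        (by exact (I1.integrableOn.add I4).add I3.integrableOn) hD hpt
    have hsplit : (∫ r in Ioi (rPlus M a + ε),
        ((Delta M a r * ‖deriv f r‖ ^ 2
          + Vpot M a m ω lam μ r / Delta M a r * ‖f r‖ ^ 2)
          + C₁ * Set.indicator (Icc B₀ B₁) (fun _ => (1 : ℝ)) r * ‖f r‖ ^ 2))
        = (∫ r in Ioi (rPlus M a + ε),
            (Delta M a r * ‖deriv f r‖ ^ 2
              + Vpot M a m ω lam μ r / Delta M a r * ‖f r‖ ^ 2))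
          + ∫ r in Ioi (rPlus M a + ε),
              C₁ * Set.indicator (Icc B₀ B₁) (fun _ => (1 : ℝ)) r * ‖f r‖ ^ 2 :=
      integral_add (by exact I1.integrableOn.add I4) I3.integrableOn
    have hg3le : (∫ r in Ioi (rPlus M a + ε),
        C₁ * Set.indicator (Icc B₀ B₁) (fun _ => (1 : ℝ)) r * ‖f r‖ ^ 2)
        ≤ C₁ * ∫ r in Icc B₀ B₁, ‖f r‖ ^ 2 := by
      have h1 : (∫ r in Ioi (rPlus M a + ε),
          C₁ * Set.indicator (Icc B₀ B₁) (fun _ => (1 : ℝ)) r * ‖f r‖ ^ 2)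
          ≤ ∫ r, C₁ * Set.indicator (Icc B₀ B₁) (fun _ => (1 : ℝ)) r * ‖f r‖ ^ 2 := by
        refine setIntegral_le_integral I3 (ae_of_all _ fun r => ?_)
        simp only [Pi.zero_apply]
        by_cases h : r ∈ Icc B₀ B₁
        · rw [Set.indicator_of_mem h]
          have h' := sq_nonneg ‖f r‖
          rw [mul_one]
          exact mul_nonneg (le_of_lt hC₁) h'
        · rw [Set.indicator_of_notMem h]; simp
      have h2 : (fun r => C₁ * Set.indicator (Icc B₀ B₁) (fun _ => (1 : ℝ)) r * ‖f r‖ ^ 2)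
          = Set.indicator (Icc B₀ B₁) (fun r => C₁ * ‖f r‖ ^ 2) := by
        funext r
        by_cases h : r ∈ Icc B₀ B₁
        · rw [Set.indicator_of_mem h, Set.indicator_of_mem h]; ring
        · rw [Set.indicator_of_notMem h, Set.indicator_of_notMem h]; ring
      have h3 : (∫ r, C₁ * Set.indicator (Icc B₀ B₁) (fun _ => (1 : ℝ)) r * ‖f r‖ ^ 2)
          = C₁ * ∫ r in Icc B₀ B₁, ‖f r‖ ^ 2 := by
        rw [h2, integral_indicator measurableSet_Icc, integral_const_mul]
      linarith
    have hLag : Lag M a m ω lam μ ε f = ∫ r in Ioi (rPlus M a + ε),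
        (Delta M a r * ‖deriv f r‖ ^ 2
          + Vpot M a m ω lam μ r / Delta M a r * ‖f r‖ ^ 2) := rfl
    rw [hLag]
    linarith [hmono, hsplit, hg3le]
  refine ⟨B₀, B₁, 1/2, C₁, hB₀, hB₀B₁, by norm_num, hC₁, hPart1, ?_⟩
  intro μ ε hμε hε
  rcases Set.eq_empty_or_nonempty (LagVals M a m ω lam μ ε) with hemp | hne
  · rw [hemp, Real.sInf_empty]; linarith
  refine le_csInf hne ?_
  rintro x ⟨f, hf, hfc, hfs, hnorm, rfl⟩
  have hD : MeasurableSet (Ioi (rPlus M a + ε)) := measurableSet_Ioi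
  have hineq := hPart1 μ ε hμε hε f hf hfc hfs
  have hLHS : 0 ≤ ∫ r in Ioi (rPlus M a + ε),
      (Delta M a r * ‖deriv f r‖ ^ 2
        + 1/2 * r ^ 2 * Set.indicator (Icc B₀ B₁)ᶜ (fun _ => (1 : ℝ)) r
          * (μ ^ 2 - ω ^ 2) * ‖f r‖ ^ 2) := by
    refine setIntegral_nonneg hD fun r hr => ?_
    have hΔ : 0 ≤ Delta M a r :=
      le_of_lt (Delta_pos' M a hM ha r (lt_of_le_of_lt (by linarith) hr))
    have hind : 0 ≤ Set.indicator (Icc B₀ B₁)ᶜ (fun _ => (1:ℝ)) r :=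
      Set.indicator_nonneg (fun _ _ => by norm_num) r
    have hμω : 0 ≤ μ ^ 2 - ω ^ 2 := by linarith
    have h1 : 0 ≤ Delta M a r * ‖deriv f r‖ ^ 2 := mul_nonneg hΔ (sq_nonneg _)
    have h2 : 0 ≤ 1/2 * r ^ 2 * Set.indicator (Icc B₀ B₁)ᶜ (fun _ => (1:ℝ)) r
        * (μ ^ 2 - ω ^ 2) * ‖f r‖ ^ 2 := by
      apply mul_nonneg _ (sq_nonneg _)
      apply mul_nonneg _ hμω
      apply mul_nonneg _ hind
      positivity
    linarith
  have hIf2 : Integrable (fun r => ‖f r‖ ^ 2) := by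
    have := integrable_mul_sq (fun _ => (1:ℝ)) continuous_const f hf.continuous hfc
    simpa using this
  have hIccle : (∫ r in Icc B₀ B₁, ‖f r‖ ^ 2) ≤ 1 := by
    have h1 : (∫ r in Icc B₀ B₁, ‖f r‖ ^ 2) ≤ ∫ r, ‖f r‖ ^ 2 :=
      setIntegral_le_integral hIf2 (ae_of_all _ fun r => by
        simp only [Pi.zero_apply]; exact sq_nonneg _)
    have hfeq : (fun r => ‖f r‖ ^ 2)
        = Set.indicator (Ioi (rPlus M a + ε)) (fun r => ‖f r‖ ^ 2) := by
      funext r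
      by_cases h : r ∈ Ioi (rPlus M a + ε)
      · rw [Set.indicator_of_mem h]
      · rw [Set.indicator_of_notMem h,
          image_eq_zero_of_notMem_tsupport (fun hK => h (hfs hK))]
        simp
    have h2 : (∫ r, ‖f r‖ ^ 2) = ∫ r in Ioi (rPlus M a + ε), ‖f r‖ ^ 2 := by
      conv_lhs => rw [hfeq]
      exact integral_indicator measurableSet_Ioi
    rw [h2, hnorm] at h1
    exact h1
  have hIccnn : 0 ≤ ∫ r in Icc B₀ B₁, ‖f r‖ ^ 2 :=
    setIntegral_nonneg measurableSet_Icc fun r _ => sq_nonneg _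
  have hCle : C₁ * (∫ r in Icc B₀ B₁, ‖f r‖ ^ 2) ≤ C₁ := by
    nlinarith [hC₁, hIccle, hIccnn]
  linarith [hLHS, hineq, hCle]
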